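/- arXiv:1704.00534 — 4 statements merged into one kernel-verified Lean document; each statement's English description precedes it below -/
import Mathlib

section
/- For real parameters a, c with a > 0 and c > 0, the matrix [[-2-ca, 1-ca, ca], [1-ca, -2-ca, ca], [-1, -1, 0]] is Hurwitz, i.e., all its eigenvalues have negative real part. For c < 0 it has an eigenvalue with positive real part. -/
open Matrix

lemma spec_key (a c : ℝ) (μ : ℂ) :
    μ ∈ spectrum ℂ ((!![-2 - c*a, 1 - c*a, c*a;
               1 - c*a, -2 - c*a, c*a;
               -1, -1, 0] : Matrix (Fin 3) (Fin 3) ℝ).map (algebraMap ℝ ℂ)) ↔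
    (μ + 1) * (μ + 3) * (μ + 2*(c*a : ℝ)) = 0 := by
  rw [spectrum.mem_iff, Matrix.isUnit_iff_isUnit_det, isUnit_iff_ne_zero, not_not]
  have h : (algebraMap ℂ (Matrix (Fin 3) (Fin 3) ℂ)) μ -
      ((!![-2 - c*a, 1 - c*a, c*a;
               1 - c*a, -2 - c*a, c*a;
               -1, -1, 0] : Matrix (Fin 3) (Fin 3) ℝ).map (algebraMap ℝ ℂ)) =
      !![μ + 2 + (c*a : ℝ), -(1 - (c*a : ℝ)), -(c*a : ℝ);
         -(1 - (c*a : ℝ)), μ + 2 + (c*a : ℝ), -(c*a : ℝ);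
         1, 1, μ] := by
    ext i j
    fin_cases i <;> fin_cases j <;>
      simp [Matrix.algebraMap_eq_diagonal, Matrix.diagonal, Complex.ext_iff] <;> ring
  rw [h, Matrix.det_fin_three]
  simp only [Matrix.cons_val', Matrix.cons_val_zero, Matrix.cons_val_one, Matrix.head_cons,
    Matrix.empty_val', Matrix.cons_val_fin_one, Matrix.head_fin_const, Complex.ofReal_mul,
    Matrix.of_apply, Matrix.cons_val_two, Matrix.tail_cons]
  constructor <;> intro h' <;> [linear_combination h'; linear_combination h']

/-- A real square matrix is Hurwitz if all its (complex) eigenvalues have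
negative real part. -/
def IsHurwitz {n : ℕ} (M : Matrix (Fin n) (Fin n) ℝ) : Prop :=
  ∀ μ ∈ spectrum ℂ (M.map (algebraMap ℝ ℂ)), μ.re < 0


theorem stmt1 (a c : ℝ) (ha : 0 < a) :
    (0 < c →
      IsHurwitz (!![-2 - c*a, 1 - c*a, c*a;
                    1 - c*a, -2 - c*a, c*a;
                    -1, -1, 0])) ∧
    (c < 0 →
      ∃ μ ∈ spectrum ℂ
          ((!![-2 - c*a, 1 - c*a, c*a;
               1 - c*a, -2 - c*a, c*a;
               -1, -1, 0] : Matrix (Fin 3) (Fin 3) ℝ).map (algebraMap ℝ ℂ)),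
        0 < μ.re) := by
  constructor
  · intro hc
    rw [IsHurwitz]
    intro μ hμ
    rw [spec_key] at hμ
    rcases mul_eq_zero.1 hμ with h | h
    · rcases mul_eq_zero.1 h with h | h
      · have : μ = -1 := by linear_combination h
        rw [this]; norm_num
      · have : μ = -3 := by linear_combination h
        rw [this]; norm_num
    · have : μ = -(2*(c*a : ℝ) : ℂ) := by linear_combination h
      rw [this]
      simp only [Complex.neg_re, Complex.ofReal_re, Complex.mul_re]
      norm_num
      nlinarith
  · intro hc
    refine ⟨(-(2*(c*a)) : ℝ), ?_, ?_⟩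
    · rw [spec_key]
      push_cast
      ring
    · simp only [Complex.ofReal_re]
      nlinarith
end

section
/- Let p₁, p₂ be real with p₁ > 0, p₁ > p₂ and p₁² > p₂², and let b, c be real with b + c > 0. Consider the matrix M(a) = [[p₁, p₂, a], [p₂, p₁, a], [b, c, 0]]. For a = 0, the eigenvalues of M(0) are p₁+p₂, p₁-p₂ (both positive) and 0. For all sufficiently small a < 0, all eigenvalues of M(a) have positive real part, hence -M(a) is Hurwitz. -/
open Matrix

lemma mem_spectrum_iff_det' {K : Type*} [Field K] (M : Matrix (Fin 3) (Fin 3) K) (μ : K) :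
    μ ∈ spectrum K M ↔ (μ • (1 : Matrix (Fin 3) (Fin 3) K) - M).det = 0 := by
  rw [spectrum.mem_iff, Algebra.algebraMap_eq_smul_one, Matrix.isUnit_iff_isUnit_det,
    isUnit_iff_ne_zero, not_not]

theorem stmt2 (p₁ p₂ b c : ℝ) (hp₁ : 0 < p₁) (hp : p₂ < p₁) (hp2 : p₂^2 < p₁^2)
    (hbc : 0 < b + c) :
    (spectrum ℝ (!![p₁, p₂, (0:ℝ); p₂, p₁, 0; b, c, 0])
        = {p₁ + p₂, p₁ - p₂, 0} ∧ 0 < p₁ + p₂ ∧ 0 < p₁ - p₂) ∧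
    ∃ ε > 0, ∀ a : ℝ, -ε < a → a < 0 →
      ((∀ μ ∈ spectrum ℂ
            ((!![p₁, p₂, a; p₂, p₁, a; b, c, 0] : Matrix (Fin 3) (Fin 3) ℝ).map
              (algebraMap ℝ ℂ)), 0 < μ.re) ∧
        IsHurwitz (-(!![p₁, p₂, a; p₂, p₁, a; b, c, 0]))) := by
  have hr : 0 < p₁ - p₂ := by linarith
  have hs : 0 < p₁ + p₂ := by nlinarith
  constructor
  · refine ⟨?_, hs, hr⟩
    ext μ
    rw [mem_spectrum_iff_det']
    have hdet : (μ • (1 : Matrix (Fin 3) (Fin 3) ℝ)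
        - !![p₁, p₂, (0:ℝ); p₂, p₁, 0; b, c, 0]).det
        = μ * (μ - (p₁ + p₂)) * (μ - (p₁ - p₂)) := by
      simp [Matrix.det_fin_three, Matrix.one_fin_three, Matrix.vecHead, Matrix.vecTail]
      ring
    rw [hdet]
    simp only [mul_eq_zero, sub_eq_zero, Set.mem_insert_iff, Set.mem_singleton_iff]
    tauto
  · -- key claim for every a < 0
    have key : ∀ a : ℝ, a < 0 → ∀ μ ∈ spectrum ℂ
        ((!![p₁, p₂, a; p₂, p₁, a; b, c, 0] : Matrix (Fin 3) (Fin 3) ℝ).map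
          (algebraMap ℝ ℂ)), 0 < μ.re := by
      intro a ha μ hμ
      rw [mem_spectrum_iff_det'] at hμ
      have hdetC : (μ • (1 : Matrix (Fin 3) (Fin 3) ℂ) -
          ((!![p₁, p₂, a; p₂, p₁, a; b, c, 0] : Matrix (Fin 3) (Fin 3) ℝ).map
            (algebraMap ℝ ℂ))).det
          = (μ - ((p₁:ℂ) - p₂)) * (μ^2 - ((p₁:ℂ) + p₂)*μ - (a:ℂ)*((b:ℂ)+c)) := by
        simp [Matrix.det_fin_three, Matrix.one_fin_three, Matrix.map_apply,
          Matrix.vecHead, Matrix.vecTail]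
        ring
      rw [hdetC, mul_eq_zero] at hμ
      rcases hμ with h | h
      · have : μ = ((p₁ : ℂ) - p₂) := by linear_combination h
        rw [this]
        simpa using hr
      · -- quadratic case
        have hre := congrArg Complex.re h
        have him := congrArg Complex.im h
        simp [pow_two, Complex.mul_re, Complex.mul_im, Complex.sub_re, Complex.sub_im,
          Complex.add_re, Complex.add_im, Complex.ofReal_re, Complex.ofReal_im] at hre him
        have him' : μ.im * (2*μ.re - (p₁ + p₂)) = 0 := by linear_combination him
        rcases mul_eq_zero.mp him' with hy0 | hx2
        · -- real root of quadratic
          rw [hy0] at hre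
          have habc : a * (b + c) < 0 := mul_neg_of_neg_of_pos ha hbc
          nlinarith [sq_nonneg μ.re]
        · linarith
    refine ⟨1, one_pos, fun a _ ha => ⟨key a ha, ?_⟩⟩
    intro μ hμ
    have hmapneg : ((-(!![p₁, p₂, a; p₂, p₁, a; b, c, 0] : Matrix (Fin 3) (Fin 3) ℝ)).map
        (algebraMap ℝ ℂ))
        = -((!![p₁, p₂, a; p₂, p₁, a; b, c, 0] : Matrix (Fin 3) (Fin 3) ℝ).map
          (algebraMap ℝ ℂ)) := by
      ext i j; simp only [Matrix.map_apply, Matrix.neg_apply, map_neg]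
    rw [hmapneg, ← spectrum.neg_eq] at hμ
    have := key a ha (-μ) (Set.mem_neg.mp hμ)
    simp at this
    linarith
end

section
/- For points p₁, p₂, p₃ ∈ ℝ² with z₁ = p₁-p₂, z₂ = p₂-p₃ nonzero, the system ṗ₁ = -ẑ₁e₁, ṗ₂ = ẑ₁e₁ - ẑ₂e₂ + cẑ₁ + (-c)ẑ₂·(-1) (i.e., with biases μ₁ = -μ₂ = c ≠ 0), ṗ₃ = ẑ₂e₂ where eₖ = ‖zₖ‖ - dₖ, has exactly two equilibrium configuration sets for (z,e): (i) e₁ = e₂ = 0 with ẑ₁ = ẑ₂ (collinear, stationary), and (ii) e₁ = e₂ = -2c/3 with ẑ₁ = -ẑ₂ (collinear, translating). -/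
open RealInnerProductSpace

theorem stmt7 (d₁ d₂ c : ℝ) (hd₁ : 0 < d₁) (hd₂ : 0 < d₂) (hc : c ≠ 0)
    (z₁ z₂ : EuclideanSpace ℝ (Fin 2)) (h₁ : z₁ ≠ 0) (h₂ : z₂ ≠ 0) :
    let zh₁ := ‖z₁‖⁻¹ • z₁
    let zh₂ := ‖z₂‖⁻¹ • z₂
    let e₁ := ‖z₁‖ - d₁
    let e₂ := ‖z₂‖ - d₂
    ((-(2*e₁) • zh₁ + e₂ • zh₂ - c • zh₁ + c • zh₂ = 0 ∧
      -(2*e₂) • zh₂ + e₁ • zh₁ + c • zh₁ - c • zh₂ = 0 ∧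
      -2*e₁ + ⟪zh₁, zh₂⟫ * e₂ - c + c * ⟪zh₁, zh₂⟫ = 0 ∧
      -2*e₂ + ⟪zh₂, zh₁⟫ * e₁ - c + c * ⟪zh₂, zh₁⟫ = 0)
     ↔ ((e₁ = 0 ∧ e₂ = 0 ∧ zh₁ = zh₂) ∨
        (e₁ = -(2*c)/3 ∧ e₂ = -(2*c)/3 ∧ zh₁ = -zh₂))) := by
  intro zh₁ zh₂ e₁ e₂
  have hu : ‖zh₁‖ = 1 := norm_smul_inv_norm h₁
  have hv : ‖zh₂‖ = 1 := norm_smul_inv_norm h₂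
  have huu : ⟪zh₁, zh₁⟫ = 1 := by
    rw [real_inner_self_eq_norm_sq, hu]; norm_num
  have hvv : ⟪zh₂, zh₂⟫ = 1 := by
    rw [real_inner_self_eq_norm_sq, hv]; norm_num
  have hsym : ⟪zh₂, zh₁⟫ = ⟪zh₁, zh₂⟫ := real_inner_comm _ _
  constructor
  · rintro ⟨hA, hB, h3, h4⟩
    set s := ⟪zh₁, zh₂⟫ with hs
    rw [hsym] at h4
    have A2 : -(2*e₁)*s + e₂ - c*s + c = 0 := by
      have := congrArg (fun w => (inner ℝ zh₂ w : ℝ)) hA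
      simp only [inner_add_right, inner_sub_right, inner_smul_right, inner_zero_right, hvv, hsym] at this
      linear_combination this
    have B1 : -(2*e₂)*s + e₁ + c - c*s = 0 := by
      have := congrArg (fun w => (inner ℝ zh₁ w : ℝ)) hB
      simp only [inner_add_right, inner_sub_right, inner_smul_right, inner_zero_right, huu, ← hs] at this
      linear_combination this
    by_cases hs1 : s = 1
    · left
      have heq : zh₁ = zh₂ := (inner_eq_one_iff_of_norm_eq_one hu hv).mp hs1
      rw [hs1] at h3 h4
      refine ⟨by linear_combination (-2/3)*h3 - (1/3)*h4, by linear_combination (-1/3)*h3 - (2/3)*h4, heq⟩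
    · by_cases hs2 : s = -1
      · right
        have heq : zh₁ = -zh₂ := by
          have hnv : ‖-zh₂‖ = 1 := by simpa using hv
          have : (inner ℝ zh₁ (-zh₂) : ℝ) = 1 := by
            rw [inner_neg_right, ← hs, hs2]; norm_num
          exact (inner_eq_one_iff_of_norm_eq_one hu hnv).mp this
        rw [hs2] at h3 h4
        refine ⟨by linear_combination (-2/3)*h3 + (1/3)*h4, by linear_combination (1/3)*h3 + (-2/3)*h4, heq⟩
      · exfalso
        have hne : (1 - s^2) ≠ 0 := by
          intro h
          rcases mul_eq_zero.mp (show (1 - s) * (1 + s) = 0 by linarith [sq_nonneg s]; ) with h' | h'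
          · exact hs1 (by linarith)
          · exact hs2 (by linarith)
        have e1 : (2*e₁ + c) * (1 - s^2) = 0 := by linear_combination -h3 + s * A2
        have e2 : (e₂ + c) * (1 - s^2) = 0 := by linear_combination -s * h3 + A2
        have e3 : (2*e₂ + c) * (1 - s^2) = 0 := by linear_combination -h4 + s * B1
        have e4 : (e₁ + c) * (1 - s^2) = 0 := by linear_combination B1 - s * h4
        have k1 : 2*e₁ + c = 0 := by
          rcases mul_eq_zero.mp e1 with h' | h'; exact h'; exact absurd h' hne
        have k4 : e₁ + c = 0 := by
          rcases mul_eq_zero.mp e4 with h' | h'; exact h'; exact absurd h' hne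
        exact hc (by linear_combination 2*k4 - k1)
  · rintro (⟨he1, he2, heq⟩ | ⟨he1, he2, heq⟩)
    · rw [he1, he2, heq]
      refine ⟨by module, by module, by rw [hvv]; ring, by rw [hvv]; ring⟩
    · rw [he1, he2, heq]
      have h1 : (inner ℝ (-zh₂) zh₂ : ℝ) = -1 := by rw [inner_neg_left, hvv]
      have h2' : (inner ℝ zh₂ (-zh₂) : ℝ) = -1 := by rw [inner_neg_right, hvv]
      refine ⟨by module, by module, by rw [h1]; ring, by rw [h2']; ring⟩
end

section
/- Consider the 3×3 matrix J(c) = [[-2+c a₁, cos θ + c a₂, c a₃],[cos θ + c a₁, -2 + c a₂, c a₃],[-b₁, -b₂, 0]] with θ ∈ (-π,π), a₃ > 0, b₁ + b₂ > 0, and a₁, a₂ ∈ ℝ. Then for all sufficiently small c > 0, J(c) is Hurwitz. -/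
open Matrix

theorem stmt18 (θ a₁ a₂ a₃ b₁ b₂ : ℝ)
    (hθ : θ ∈ Set.Ioo (-Real.pi) Real.pi) (ha₃ : 0 < a₃) (hb : 0 < b₁ + b₂) :
    ∃ ε > 0, ∀ c : ℝ, 0 < c → c < ε →
      IsHurwitz (!![-2 + c*a₁, Real.cos θ + c*a₂, c*a₃;
                    Real.cos θ + c*a₁, -2 + c*a₂, c*a₃;
                    -b₁, -b₂, 0]) := by
  have hpi := Real.pi_pos
  have hcos2 : 0 < Real.cos (θ/2) := by
    apply Real.cos_pos_of_mem_Ioo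
    constructor <;> [linarith [hθ.1]; linarith [hθ.2]]
  have hcosgt : -1 < Real.cos θ := by
    have h2 : Real.cos θ = 2 * Real.cos (θ/2)^2 - 1 := by
      have h := Real.cos_two_mul (θ/2)
      rw [show 2*(θ/2) = θ by ring] at h
      exact h
    nlinarith
  have hcosle : Real.cos θ ≤ 1 := Real.cos_le_one θ
  refine ⟨1 / (|a₁ + a₂| + 1), by positivity, fun c hc hcε μ hμ => ?_⟩
  set p := Real.cos θ with hp
  -- constants
  have hca : c * (a₁ + a₂) < 1 := by
    have h1 : c * (a₁ + a₂) ≤ c * |a₁ + a₂| :=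
      mul_le_mul_of_nonneg_left (le_abs_self _) hc.le
    have h2 : c * (|a₁ + a₂| + 1) < 1 := by
      rw [lt_div_iff₀ (by positivity)] at hcε
      linarith
    nlinarith [abs_nonneg (a₁ + a₂)]
  set α : ℝ := 2 - p - c * (a₁ + a₂) with hα
  set β : ℝ := c * a₃ * (b₁ + b₂) with hβ
  have hαpos : 0 < α := by simp only [hα]; linarith
  have hβpos : 0 < β := by positivity
  -- determinant vanishes
  rw [spectrum.mem_iff] at hμ
  have hdet : ((algebraMap ℂ (Matrix (Fin 3) (Fin 3) ℂ)) μ -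
      (!![-2 + c*a₁, p + c*a₂, c*a₃;
          p + c*a₁, -2 + c*a₂, c*a₃;
          -b₁, -b₂, 0]).map (algebraMap ℝ ℂ)).det = 0 := by
    by_contra h
    exact hμ ((Matrix.isUnit_iff_isUnit_det _).2 (isUnit_iff_ne_zero.2 h))
  rw [Algebra.algebraMap_eq_smul_one] at hdet
  have hfac : (μ + (2 + (p:ℂ))) * (μ^2 + (α:ℂ)*μ + (β:ℂ)) = 0 := by
    rw [← hdet]
    simp [Matrix.det_fin_three, Matrix.one_apply, hα, hβ]
    ring
  rcases mul_eq_zero.1 hfac with h1 | h2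
  · have : μ = -(2 + (p:ℂ)) := by linear_combination h1
    rw [this]
    simp
    linarith
  · -- quadratic root with positive coefficients
    set x := μ.re
    set y := μ.im
    have hre : x^2 - y^2 + α*x + β = 0 := by
      have := congrArg Complex.re h2
      simpa [Complex.add_re, Complex.mul_re, Complex.sq_norm, pow_two] using this
    have him : y * (2*x + α) = 0 := by
      have := congrArg Complex.im h2
      simp [Complex.add_im, Complex.mul_im, pow_two] at this
      linarith
    by_contra hx
    push_neg at hx
    have hy : y = 0 := by
      rcases mul_eq_zero.1 him with h | h
      · exact h
      · exfalso; nlinarith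
    rw [hy] at hre
    nlinarith
end
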